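/- The matrix function Φ(k) = 0 for k ≤ −m−1, Φ(k) = A^k for −m ≤ k ≤ 0, and Φ(k) = A^k (I + Σ_{d=1}^{l} P^𝔇(k,d)) for (l−1)(m+1)+1 ≤ k ≤ l(m+1), solves the delayed matrix initial value problem Φ(k+1) = A Φ(k) + B_k Φ(k−m) for all k ≥ 0, with Φ(k) = A^k for −m ≤ k ≤ 0. -/

import Mathlib

/-! Let `X = delexp D m` and `P(k, d) = Pmat D m d k`, so `Φ k = A ^ k * X k`. Since
`B k * A ^ (k - m) = A ^ (k + 1) * D k`, the delayed equation for `Φ` is `A ^ (k + 1)` times the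
recursion `X (k + 1) = X k + D k * X (k - m)`. As `P(k, d + 1)` vanishes as soon as
`k ≤ d (m + 1)`, `X k` is the sum of `P(k, d)` over all `d` up to any large bound, with no
`k`-dependent cutoff. The recursion for `X` then holds term by term: peeling the top summand
`j = k` off `P(k + 1, d + 1)` leaves `P(k, d + 1) + D k * P(k - m, d)`. -/

open Finset Matrix

noncomputable def Pmat {n : ℕ} (D : ℤ → Matrix (Fin n) (Fin n) ℝ) (m : ℤ) :
    ℕ → ℤ → Matrix (Fin n) (Fin n) ℝ
  | 0, _ => 1
  | d + 1, k => ∑ j ∈ Finset.Icc ((d : ℤ) * (m + 1)) (k - 1), D j * Pmat D m d (j - m)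

noncomputable def delexp {n : ℕ} (D : ℤ → Matrix (Fin n) (Fin n) ℝ) (m : ℤ) (k : ℤ) :
    Matrix (Fin n) (Fin n) ℝ :=
  if k < -m then 0
  else if k ≤ 0 then 1
  else 1 + ∑ d ∈ Finset.Icc 1 ((k + m) / (m + 1)).toNat, Pmat D m d k

/-- Integer power `A^k` of an invertible matrix. -/
noncomputable def Az {n : ℕ} {A : Matrix (Fin n) (Fin n) ℝ} (hA : IsUnit A) (k : ℤ) :
    Matrix (Fin n) (Fin n) ℝ :=
  ((hA.unit ^ k : (Matrix (Fin n) (Fin n) ℝ)ˣ) : Matrix (Fin n) (Fin n) ℝ)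

section Pmat

variable {n : ℕ} (D : ℤ → Matrix (Fin n) (Fin n) ℝ) (m : ℤ)

lemma Pmat_succ_eq_zero {d : ℕ} {k : ℤ} (h : k ≤ d * (m + 1)) : Pmat D m (d + 1) k = 0 := by
  rw [Pmat, Finset.Icc_eq_empty (by omega), Finset.sum_empty]

lemma Pmat_succ_add_one (d : ℕ) {k : ℤ} (hk : 0 ≤ k) :
    Pmat D m (d + 1) (k + 1) = Pmat D m (d + 1) k + D k * Pmat D m d (k - m) := by
  rcases le_or_gt ((d : ℤ) * (m + 1)) k with h | h
  · rw [Pmat, Pmat, add_sub_cancel_right, ← Finset.insert_Icc_sub_one_right_eq_Icc h,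
      Finset.sum_insert (by simp), add_comm]
  · obtain _ | d := d
    · rw [Nat.cast_zero, zero_mul] at h; omega
    · have h' : k - m ≤ d * (m + 1) := by push_cast at h; linarith
      rw [Pmat_succ_eq_zero D m h.le, Pmat_succ_eq_zero D m (by linarith),
        Pmat_succ_eq_zero D m h', mul_zero, add_zero]

variable {D m}

lemma delexp_of_le_zero {k : ℤ} (hk : -m ≤ k) (hk0 : k ≤ 0) : delexp D m k = 1 := by
  rw [delexp, if_neg (by omega), if_pos hk0]

lemma delexp_eq_sum_range (hm : 0 ≤ m) {k : ℤ} (hk : -m ≤ k) {N : ℕ} (hN : k ≤ N * (m + 1)) :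
    delexp D m k = ∑ d ∈ Finset.range (N + 1), Pmat D m d k := by
  rcases le_or_gt k 0 with hk0 | hk0
  · rw [delexp_of_le_zero hk hk0, Finset.sum_range_succ', Pmat, eq_comm, add_eq_right]
    refine Finset.sum_eq_zero fun d _ => Pmat_succ_eq_zero D m ?_
    have : (0 : ℤ) ≤ d * (m + 1) := by positivity
    omega
  set q := (k + m) / (m + 1)
  have hq_lt : k + m < (q + 1) * (m + 1) := Int.lt_ediv_add_one_mul_self _ (by omega)
  have hq_nonneg : 0 ≤ q := Int.ediv_nonneg (by omega) (by omega)
  have hqN : q < N + 1 := Int.ediv_lt_of_lt_mul (by omega) (by linarith)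
  have hsum : delexp D m k = ∑ d ∈ Finset.range (q.toNat + 1), Pmat D m d k := by
    rw [delexp, if_neg (by omega), if_neg (by omega), Finset.range_eq_Ico,
      Finset.sum_eq_sum_Ico_succ_bot (Nat.succ_pos _), zero_add, Nat.succ_eq_add_one,
      Finset.Ico_add_one_right_eq_Icc, Pmat]
  rw [hsum]
  refine Finset.sum_subset (Finset.range_subset_range.mpr (by omega)) fun d _ hd => ?_
  obtain _ | d := d
  · simp at hd
  · refine Pmat_succ_eq_zero D m ?_
    have : q * (m + 1) ≤ d * (m + 1) :=
      mul_le_mul_of_nonneg_right (by rw [Finset.mem_range] at hd; omega) (by omega)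
    linarith

lemma delexp_add_one (hm : 0 ≤ m) {k : ℤ} (hk : 0 ≤ k) :
    delexp D m (k + 1) = delexp D m k + D k * delexp D m (k - m) := by
  obtain ⟨N, hN⟩ : ∃ N : ℕ, (N : ℤ) = k + 1 := ⟨(k + 1).toNat, Int.toNat_of_nonneg (by omega)⟩
  have hNm : (N : ℤ) ≤ N * (m + 1) := le_mul_of_one_le_right (by omega) (by omega)
  rw [delexp_eq_sum_range hm (by omega) (N := N + 1) (by push_cast; nlinarith),
    delexp_eq_sum_range hm (by omega) (N := N + 1) (by push_cast; nlinarith),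
    delexp_eq_sum_range hm (by omega) (N := N) (by linarith), Finset.sum_range_succ',
    Finset.sum_range_succ' (fun d => Pmat D m d k), Finset.mul_sum]
  simp only [Pmat_succ_add_one D m _ hk, Finset.sum_add_distrib, Pmat.eq_1]
  abel

end Pmat

section Az

variable {n : ℕ} {A : Matrix (Fin n) (Fin n) ℝ} (hA : IsUnit A)

lemma Az_add (a b : ℤ) : Az hA (a + b) = Az hA a * Az hA b := by
  rw [Az, _root_.zpow_add, Units.val_mul, Az, Az]

lemma Az_zero : Az hA 0 = 1 := by simp [Az]

lemma Az_one : Az hA 1 = A := by simp [Az]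

end Az

theorem Phi_solves_matrix_IVP {n : ℕ} (m : ℤ) (hm : 1 ≤ m)
    (A : Matrix (Fin n) (Fin n) ℝ) (hA : IsUnit A)
    (B : ℤ → Matrix (Fin n) (Fin n) ℝ)
    (D : ℤ → Matrix (Fin n) (Fin n) ℝ)
    (hD : ∀ k : ℤ, D k = Az hA (-k - 1) * B k * Az hA (k - m))
    (Φ : ℤ → Matrix (Fin n) (Fin n) ℝ)
    (hΦ : ∀ k : ℤ, Φ k = Az hA k * delexp D m k) :
    (∀ k : ℤ, 0 ≤ k → Φ (k + 1) = A * Φ k + B k * Φ (k - m)) ∧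
    (∀ k : ℤ, -m ≤ k → k ≤ 0 → Φ k = Az hA k) := by
  refine ⟨fun k hk => ?_, fun k hk hk0 => by rw [hΦ, delexp_of_le_zero hk hk0, mul_one]⟩
  have hshift : Az hA (k + 1) = A * Az hA k := by rw [add_comm, Az_add, Az_one]
  have hcancel : Az hA (k + 1) * Az hA (-k - 1) = 1 := by
    rw [← Az_add, show k + 1 + (-k - 1) = 0 by ring, Az_zero]
  rw [hΦ, hΦ, hΦ, delexp_add_one (by omega) hk, mul_add, hD]
  congr 1
  · rw [hshift, mul_assoc]
  · rw [← mul_assoc, ← mul_assoc, ← mul_assoc, hcancel, one_mul, mul_assoc]
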